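/- Let C₁ and C₂ be nearly convex subsets of X and let D₁ and D₂ be subsets of X such that C₁ ≃ D₁, C₂ ≃ D₂, and ri C₁ ∩ ri C₂ ≠ ∅. Then C₁ ∩ C₂ ≃ D₁ ∩ D₂. -/

import Mathlib

/-!
A set squeezed between a convex set `E` and its closure is nearly equal to `E`: the closures agree
trivially, and the relative interiors agree because the affine spans coincide and
`ri (cl E) = ri E`, which follows from the fact that a segment from a relative interior point to a
closure point stays in the relative interior. Writing `Aᵢ ⊆ Cᵢ ⊆ cl Aᵢ` with `Aᵢ` convex, the
same segment fact shows that the convex set `E = ri A₁ ∩ ri A₂` is dense in `cl A₁ ∩ cl A₂`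
(shrink segments towards a common relative interior point). Since `ri Dᵢ = ri Aᵢ` and
`cl Dᵢ = cl Aᵢ`, both `C₁ ∩ C₂` and `D₁ ∩ D₂` lie between `E` and `cl E`, so both are nearly
equal to `E`.
-/

open Set Pointwise

/-- A set is nearly convex if it is sandwiched between a convex set and its closure. -/
def NearlyConvex {X : Type*} [NormedAddCommGroup X] [NormedSpace ℝ X] (S : Set X) : Prop :=
  ∃ C : Set X, Convex ℝ C ∧ C ⊆ S ∧ S ⊆ closure C

/-- Two sets are nearly equal if they have the same closure and the same relative
(intrinsic) interior. -/
def NearEq {X : Type*} [NormedAddCommGroup X] [NormedSpace ℝ X] (C D : Set X) : Prop :=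
  closure C = closure D ∧ intrinsicInterior ℝ C = intrinsicInterior ℝ D

open Filter Topology

section AddTorsor

variable {𝕜 V P : Type*} [Ring 𝕜] [AddCommGroup V] [Module 𝕜 V] [TopologicalSpace P]
  [AddTorsor V P] {s t : Set P}

theorem mem_intrinsicInterior_iff_nhds {x : P} :
    x ∈ intrinsicInterior 𝕜 s ↔
      x ∈ affineSpan 𝕜 s ∧ ∃ U ∈ 𝓝 x, U ∩ affineSpan 𝕜 s ⊆ s := by
  constructor
  · rintro ⟨y, hy, rfl⟩
    obtain ⟨U, hU, hUs⟩ := (mem_nhds_subtype _ _ _).1 (mem_interior_iff_mem_nhds.1 hy)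
    exact ⟨y.2, U, hU, fun w ⟨hwU, hwM⟩ => hUs (a := ⟨w, hwM⟩) hwU⟩
  · rintro ⟨hx, U, hU, hUs⟩
    refine ⟨⟨x, hx⟩, mem_interior_iff_mem_nhds.2 ((mem_nhds_subtype _ _ _).2 ⟨U, hU, ?_⟩), rfl⟩
    exact fun w hw => hUs ⟨hw, w.2⟩

theorem intrinsicInterior_mono_of_affineSpan_eq (hst : s ⊆ t)
    (h : affineSpan 𝕜 s = affineSpan 𝕜 t) : intrinsicInterior 𝕜 s ⊆ intrinsicInterior 𝕜 t := by
  intro x hx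
  rw [mem_intrinsicInterior_iff_nhds, h] at hx
  obtain ⟨hxM, U, hU, hUs⟩ := hx
  exact mem_intrinsicInterior_iff_nhds.2 ⟨hxM, U, hU, hUs.trans hst⟩

end AddTorsor

section TopologicalVectorSpace

variable {E : Type*} [AddCommGroup E] [Module ℝ E] [TopologicalSpace E]
  [IsTopologicalAddGroup E] [ContinuousSMul ℝ E] {s t : Set E}

theorem Convex.combo_intrinsicInterior_intrinsicClosure_mem_intrinsicInterior (hs : Convex ℝ s)
    {x y : E} (hx : x ∈ intrinsicInterior ℝ s) (hy : y ∈ intrinsicClosure ℝ s) {a b : ℝ}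
    (ha : 0 < a) (hb : 0 ≤ b) (hab : a + b = 1) :
    a • x + b • y ∈ intrinsicInterior ℝ s := by
  rw [intrinsicClosure_eq_closure_inter_affineSpan] at hy
  obtain ⟨hy, hyM⟩ := hy
  rw [mem_intrinsicInterior_iff_nhds] at hx ⊢
  obtain ⟨hxM, U', hU', hU's⟩ := hx
  obtain ⟨U, hUU', hUo, hxU⟩ := mem_nhds_iff.1 hU'
  have hUs : U ∩ affineSpan ℝ s ⊆ s := (inter_subset_inter_left _ hUU').trans hU's
  set z := a • x + b • y
  -- `pull y'` inverts the homothety of ratio `a` centred at `y'`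
  let pull : E → E → E := fun y' w => a⁻¹ • (w - b • y')
  have hpull_z : pull y z = x := by
    simp only [pull, z, add_sub_cancel_right, inv_smul_smul₀ ha.ne']
  have hpull_inv : ∀ y' w, a • pull y' w + b • y' = w := by
    intro y' w
    simp only [pull, smul_inv_smul₀ ha.ne', sub_add_cancel]
  have hpull_mem : ∀ y' ∈ affineSpan ℝ s, ∀ w ∈ affineSpan ℝ s, pull y' w ∈ affineSpan ℝ s := by
    intro y' hy' w hw
    convert AffineMap.lineMap_mem a⁻¹ hy' hw using 1
    simp only [pull]
    rw [AffineMap.lineMap_apply_module, eq_sub_of_add_eq' hab]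
    match_scalars <;> field_simp
    ring
  have hzM : z ∈ affineSpan ℝ s := by
    simpa only [z, AffineMap.lineMap_apply_module, ← hab, add_sub_cancel_right]
      using AffineMap.lineMap_mem b hxM hyM
  obtain ⟨y', hy'U, hy's⟩ : ∃ y' ∈ (pull · z) ⁻¹' U, y' ∈ s := by
    refine mem_closure_iff_nhds.1 hy _ ((Continuous.continuousAt ?_).preimage_mem_nhds ?_)
    · fun_prop
    · rw [hpull_z]; exact hUo.mem_nhds hxU
  refine ⟨hzM, pull y' ⁻¹' U, ?_, fun w ⟨hwU, hwM⟩ => ?_⟩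
  · exact (Continuous.continuousAt (by fun_prop)).preimage_mem_nhds (hUo.mem_nhds hy'U)
  · rw [← hpull_inv y' w]
    exact hs (hUs ⟨hwU, hpull_mem y' (subset_affineSpan ℝ s hy's) w hwM⟩) hy's ha.le hb hab

protected theorem Convex.intrinsicInterior (hs : Convex ℝ s) :
    Convex ℝ (intrinsicInterior ℝ s) :=
  convex_iff_openSegment_subset.2 fun _ hx _ hy _ ⟨_, _, ha, hb, hab, hz⟩ =>
    hz ▸ hs.combo_intrinsicInterior_intrinsicClosure_mem_intrinsicInterior hx
      (subset_intrinsicClosure (intrinsicInterior_subset hy)) ha hb.le hab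

theorem Convex.intrinsicClosure_inter_subset_closure_intrinsicInterior_inter (hs : Convex ℝ s)
    (ht : Convex ℝ t) (hst : (intrinsicInterior ℝ s ∩ intrinsicInterior ℝ t).Nonempty) :
    intrinsicClosure ℝ s ∩ intrinsicClosure ℝ t ⊆
      closure (intrinsicInterior ℝ s ∩ intrinsicInterior ℝ t) := by
  obtain ⟨x, hxs, hxt⟩ := hst
  rintro y ⟨hys, hyt⟩
  have hlim : Tendsto (fun a : ℝ => a • x + (1 - a) • y) (𝓝[>] 0) (𝓝 y) := by
    have : Continuous fun a : ℝ => a • x + (1 - a) • y := by fun_prop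
    simpa using (this.tendsto 0).mono_left nhdsWithin_le_nhds
  refine mem_closure_of_tendsto hlim ?_
  filter_upwards [Ioo_mem_nhdsGT one_pos] with a ⟨ha₀, ha₁⟩
  have hb : 0 ≤ 1 - a := sub_nonneg.2 ha₁.le
  exact ⟨hs.combo_intrinsicInterior_intrinsicClosure_mem_intrinsicInterior hxs hys ha₀ hb
      (add_sub_cancel _ _),
    ht.combo_intrinsicInterior_intrinsicClosure_mem_intrinsicInterior hxt hyt ha₀ hb
      (add_sub_cancel _ _)⟩

end TopologicalVectorSpace

section FiniteDimensional

variable {X : Type*} [NormedAddCommGroup X] [NormedSpace ℝ X] [FiniteDimensional ℝ X]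

theorem affineSpan_closure (s : Set X) : affineSpan ℝ (closure s) = affineSpan ℝ s := by
  rw [← intrinsicClosure_eq_closure ℝ s, affineSpan_intrinsicClosure]

theorem affineSpan_eq_of_subset_of_subset_closure {s t : Set X} (hst : s ⊆ t)
    (hts : t ⊆ closure s) : affineSpan ℝ t = affineSpan ℝ s :=
  ((affineSpan_mono ℝ hts).trans_eq (affineSpan_closure s)).antisymm (affineSpan_mono ℝ hst)

theorem Convex.intrinsicInterior_closure_subset {s : Set X} (hs : Convex ℝ s) :
    intrinsicInterior ℝ (closure s) ⊆ intrinsicInterior ℝ s := by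
  intro x hx
  rcases s.eq_empty_or_nonempty with rfl | hne
  · simp at hx
  obtain ⟨y, hy⟩ := hne.intrinsicInterior hs
  rw [mem_intrinsicInterior_iff_nhds, affineSpan_closure] at hx
  obtain ⟨hxM, U, hU, hUs⟩ := hx
  -- prolong the segment from `y` through `x` slightly beyond `x`, to a point of `closure s`
  have hlim : Tendsto (fun t : ℝ => x + t • (x - y)) (𝓝[>] 0) (𝓝 x) := by
    have : Continuous fun t : ℝ => x + t • (x - y) := by fun_prop
    simpa using (this.tendsto 0).mono_left nhdsWithin_le_nhds
  obtain ⟨t, htU, ht⟩ := ((hlim.eventually hU).and self_mem_nhdsWithin).exists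
  have hzM : x + t • (x - y) ∈ affineSpan ℝ s := by
    convert AffineMap.lineMap_mem (-t) hxM (subset_affineSpan ℝ s (intrinsicInterior_subset hy))
      using 1
    rw [AffineMap.lineMap_apply_module]
    module
  have hz : x + t • (x - y) ∈ intrinsicClosure ℝ s := by
    rw [intrinsicClosure_eq_closure]
    exact hUs ⟨htU, hzM⟩
  have ht₁ : (0 : ℝ) < 1 + t := by linarith
  convert hs.combo_intrinsicInterior_intrinsicClosure_mem_intrinsicInterior hy hz
    (div_pos ht ht₁) (one_div_nonneg.2 ht₁.le) (by field_simp; ring) using 1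
  match_scalars <;> field_simp
  ring

theorem Convex.nearEq_of_subset_of_subset_closure {e s : Set X} (he : Convex ℝ e) (hes : e ⊆ s)
    (hse : s ⊆ closure e) : NearEq s e := by
  have hspan := affineSpan_eq_of_subset_of_subset_closure hes hse
  refine ⟨(closure_minimal hse isClosed_closure).antisymm (closure_mono hes), ?_⟩
  refine Subset.antisymm ?_ (intrinsicInterior_mono_of_affineSpan_eq hes hspan.symm)
  exact (intrinsicInterior_mono_of_affineSpan_eq hse
    (hspan.trans (affineSpan_closure e).symm)).trans he.intrinsicInterior_closure_subset

end FiniteDimensional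

section NearEq

variable {X : Type*} [NormedAddCommGroup X] [NormedSpace ℝ X]

theorem NearEq.symm {s t : Set X} (h : NearEq s t) : NearEq t s :=
  ⟨h.1.symm, h.2.symm⟩

theorem NearEq.trans {s t u : Set X} (hst : NearEq s t) (htu : NearEq t u) : NearEq s u :=
  ⟨hst.1.trans htu.1, hst.2.trans htu.2⟩

theorem NearEq.inter_intrinsicInterior [FiniteDimensional ℝ X] {s t a b : Set X}
    (hsa : NearEq s a) (htb : NearEq t b) (ha : Convex ℝ a) (hb : Convex ℝ b)
    (hab : (intrinsicInterior ℝ a ∩ intrinsicInterior ℝ b).Nonempty) :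
    NearEq (s ∩ t) (intrinsicInterior ℝ a ∩ intrinsicInterior ℝ b) := by
  refine (ha.intrinsicInterior.inter hb.intrinsicInterior).nearEq_of_subset_of_subset_closure
    ?_ ?_
  · rw [← hsa.2, ← htb.2]
    exact inter_subset_inter intrinsicInterior_subset intrinsicInterior_subset
  · refine (inter_subset_inter (hsa.1 ▸ subset_closure) (htb.1 ▸ subset_closure)).trans ?_
    simpa only [intrinsicClosure_eq_closure] using
      ha.intrinsicClosure_inter_subset_closure_intrinsicInterior_inter hb hab

end NearEq

/-- If `C₁, C₂` are nearly convex, `C₁ ≃ D₁`, `C₂ ≃ D₂`, and `ri C₁ ∩ ri C₂ ≠ ∅`,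
then `C₁ ∩ C₂ ≃ D₁ ∩ D₂`. -/
theorem nearEq_inter {X : Type*} [NormedAddCommGroup X] [InnerProductSpace ℝ X]
    [FiniteDimensional ℝ X] (C₁ C₂ D₁ D₂ : Set X)
    (hC₁ : NearlyConvex C₁) (hC₂ : NearlyConvex C₂)
    (h₁ : NearEq C₁ D₁) (h₂ : NearEq C₂ D₂)
    (hri : (intrinsicInterior ℝ C₁ ∩ intrinsicInterior ℝ C₂).Nonempty) :
    NearEq (C₁ ∩ C₂) (D₁ ∩ D₂) := by
  obtain ⟨A, hA, hAC₁, hC₁A⟩ := hC₁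
  obtain ⟨B, hB, hBC₂, hC₂B⟩ := hC₂
  have hA₁ : NearEq C₁ A := hA.nearEq_of_subset_of_subset_closure hAC₁ hC₁A
  have hB₂ : NearEq C₂ B := hB.nearEq_of_subset_of_subset_closure hBC₂ hC₂B
  rw [hA₁.2, hB₂.2] at hri
  exact (hA₁.inter_intrinsicInterior hB₂ hA hB hri).trans
    ((h₁.symm.trans hA₁).inter_intrinsicInterior (h₂.symm.trans hB₂) hA hB hri).symm
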